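/- If f has a Taylor expansion of order n−1 at x₀ and Q ∈ ∂^n f(x₀) ∩ ∂_+^n f(x₀), then f has a Taylor expansion of order n at x₀ with n-homogeneous part Q, and Q is the unique polynomial with this property. -/

import Mathlib

open Filter Topology Finset

noncomputable section

/-- ℝ^N with the Euclidean norm. -/
abbrev Euc (N : ℕ) := EuclideanSpace ℝ (Fin N)

/-- `P : ℝ^N → F` is a `k`-homogeneous polynomial, i.e. the restriction to the diagonal
of a continuous `k`-multilinear map. -/
def IsHomogPoly {N : ℕ} {F : Type*} [NormedAddCommGroup F] [NormedSpace ℝ F]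
    (k : ℕ) (P : Euc N → F) : Prop :=
  ∃ M : ContinuousMultilinearMap ℝ (fun _ : Fin k => Euc N) F, ∀ v, P v = M (fun _ => v)

/-- `f` has a Taylor expansion of order `n` at `x`, with `k`-homogeneous parts `P k`. -/
def HasTaylorExpansion {N : ℕ} {F : Type*} [NormedAddCommGroup F] [NormedSpace ℝ F]
    (f : Euc N → F) (x : Euc N) (P : ℕ → Euc N → F) (n : ℕ) : Prop :=
  (∀ k ∈ Finset.Icc 1 n, IsHomogPoly k (P k)) ∧
  Tendsto (fun h => ‖f (x + h) - f x - ∑ k ∈ Finset.Icc 1 n, P k h‖ / ‖h‖ ^ n)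
    (𝓝[≠] (0 : Euc N)) (𝓝 0)

/-- `Q ∈ ∂ⁿ f(x)`: `Q` is an `n`-homogeneous polynomial with
`liminf_{h→0} (f(x+h) − f(x) − Σ_{k=1}^{n-1} P_k(h) − Q(h))/|h|ⁿ ≥ 0`,
where `P k`, `k = 1, …, n-1`, are the homogeneous parts of the Taylor expansion of
order `n-1` of `f` at `x` (`P 1 = Df(x)`). -/
def SubPoly {N : ℕ} (f : Euc N → ℝ) (x : Euc N) (P : ℕ → Euc N → ℝ) (n : ℕ)
    (Q : Euc N → ℝ) : Prop :=
  IsHomogPoly n Q ∧ ∀ ε > (0 : ℝ), ∀ᶠ h in 𝓝[≠] (0 : Euc N),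
    -ε ≤ (f (x + h) - f x - ∑ k ∈ Finset.Icc 1 (n - 1), P k h - Q h) / ‖h‖ ^ n

/-- `Q ∈ ∂₊ⁿ f(x)`: the superdifferential condition
`limsup_{h→0} (f(x+h) − f(x) − Σ_{k=1}^{n-1} P_k(h) − Q(h))/|h|ⁿ ≤ 0`. -/
def SupPoly {N : ℕ} (f : Euc N → ℝ) (x : Euc N) (P : ℕ → Euc N → ℝ) (n : ℕ)
    (Q : Euc N → ℝ) : Prop :=
  IsHomogPoly n Q ∧ ∀ ε > (0 : ℝ), ∀ᶠ h in 𝓝[≠] (0 : Euc N),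
    (f (x + h) - f x - ∑ k ∈ Finset.Icc 1 (n - 1), P k h - Q h) / ‖h‖ ^ n ≤ ε

/-! If `Q` is both a sub- and a superpolynomial, the normalized remainder
`(f(x₀+h) − f(x₀) − Σ_{k<n} P_k(h) − Q(h))/|h|ⁿ` has liminf `≥ 0` and limsup `≤ 0`, hence tends
to `0`: that is the Taylor expansion of order `n`. Uniqueness: two `n`-homogeneous polynomials
whose difference is `o(|h|ⁿ)` coincide, since `(Q − Q')(t v)/|t v|ⁿ` does not depend on `t > 0`. -/

theorem sum_Icc_update_top {α M : Type*} [AddCommMonoid M] {n : ℕ} (hn : 1 ≤ n)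
    (P : ℕ → α → M) (R : α → M) (h : α) :
    ∑ k ∈ Icc 1 n, Function.update P n R k h = ∑ k ∈ Icc 1 (n - 1), P k h + R h := by
  obtain ⟨m, rfl⟩ := Nat.exists_eq_add_of_le' hn
  rw [sum_Icc_succ_top (by omega), Nat.add_sub_cancel, Function.update_self]
  congr 1
  refine sum_congr rfl fun k hk => ?_
  rw [Function.update_of_ne (by simp only [mem_Icc] at hk; omega)]

theorem tendsto_zero_of_forall_eventually_neg_le_le {α : Type*} {l : Filter α} {g : α → ℝ}
    (hlow : ∀ ε > 0, ∀ᶠ x in l, -ε ≤ g x) (hup : ∀ ε > 0, ∀ᶠ x in l, g x ≤ ε) :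
    Tendsto g l (𝓝 0) := by
  refine Metric.tendsto_nhds.2 fun ε hε => ?_
  filter_upwards [hlow (ε / 2) (half_pos hε), hup (ε / 2) (half_pos hε)] with x h₁ h₂
  rw [Real.dist_eq, sub_zero]
  exact (abs_le.2 ⟨h₁, h₂⟩).trans_lt (half_lt_self hε)

namespace IsHomogPoly

variable {N k : ℕ} {F : Type*} [NormedAddCommGroup F] [NormedSpace ℝ F] {R : Euc N → F}

theorem sub {R' : Euc N → F} (hR : IsHomogPoly k R) (hR' : IsHomogPoly k R') :
    IsHomogPoly k (R - R') := by
  obtain ⟨M, hM⟩ := hR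
  obtain ⟨M', hM'⟩ := hR'
  exact ⟨M - M', fun v => by simp [hM, hM']⟩

theorem map_zero (hR : IsHomogPoly k R) (hk : 0 < k) : R 0 = 0 := by
  obtain ⟨M, hM⟩ := hR
  rw [hM, M.map_coord_zero (⟨0, hk⟩ : Fin k) rfl]

theorem map_smul (hR : IsHomogPoly k R) (t : ℝ) (v : Euc N) : R (t • v) = t ^ k • R v := by
  obtain ⟨M, hM⟩ := hR
  simpa [hM] using M.map_smul_univ (fun _ => t) (fun _ => v)

theorem eq_zero_of_tendsto (hR : IsHomogPoly k R) (hk : 0 < k)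
    (hlim : Tendsto (fun h => ‖R h‖ / ‖h‖ ^ k) (𝓝[≠] (0 : Euc N)) (𝓝 0)) : R = 0 := by
  funext v
  rcases eq_or_ne v 0 with rfl | hv
  · exact hR.map_zero hk
  have hray : Tendsto (fun t : ℝ => t • v) (𝓝[>] 0) (𝓝[≠] 0) := by
    refine tendsto_nhdsWithin_of_tendsto_nhds_of_eventually_within _ ?_ ?_
    · exact ((continuous_id.smul continuous_const).tendsto' 0 0 (zero_smul ℝ v)).mono_left
        nhdsWithin_le_nhds
    · filter_upwards [self_mem_nhdsWithin] with t ht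
      exact smul_ne_zero (ne_of_gt ht) hv
  have hconst : ∀ᶠ t in 𝓝[>] (0 : ℝ), ‖R (t • v)‖ / ‖t • v‖ ^ k = ‖R v‖ / ‖v‖ ^ k := by
    filter_upwards [self_mem_nhdsWithin] with t (ht : 0 < t)
    rw [hR.map_smul, norm_smul, norm_smul, Real.norm_of_nonneg ht.le, norm_pow,
      Real.norm_of_nonneg ht.le, mul_pow, mul_div_mul_left _ _ (pow_ne_zero k ht.ne')]
  have hzero : ‖R v‖ / ‖v‖ ^ k = 0 :=
    tendsto_nhds_unique tendsto_const_nhds ((hlim.comp hray).congr' hconst)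
  simpa [hv] using hzero

end IsHomogPoly

namespace HasTaylorExpansion

variable {N n : ℕ} {f : Euc N → ℝ} {x : Euc N} {P : ℕ → Euc N → ℝ} {Q : Euc N → ℝ}

theorem update_of_subPoly_of_supPoly (hn : 1 ≤ n)
    (hP : ∀ k ∈ Icc 1 (n - 1), IsHomogPoly k (P k))
    (hsub : SubPoly f x P n Q) (hsup : SupPoly f x P n Q) :
    HasTaylorExpansion f x (Function.update P n Q) n := by
  refine ⟨fun k hk => ?_, ?_⟩
  · rcases eq_or_ne k n with rfl | hkn
    · simpa using hsub.1
    · rw [Function.update_of_ne hkn]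
      exact hP k (by simp only [mem_Icc] at hk ⊢; omega)
  · have hrem := (tendsto_zero_of_forall_eventually_neg_le_le hsub.2 hsup.2).abs
    rw [abs_zero] at hrem
    refine hrem.congr fun h => ?_
    rw [sum_Icc_update_top hn, sub_add_eq_sub_sub, Real.norm_eq_abs, abs_div, abs_pow,
      abs_norm]

theorem eq_of_update {Q' : Euc N → ℝ} (hn : 1 ≤ n)
    (hQ : HasTaylorExpansion f x (Function.update P n Q) n)
    (hQ' : HasTaylorExpansion f x (Function.update P n Q') n) : Q' = Q := by
  have homog : ∀ {R}, HasTaylorExpansion f x (Function.update P n R) n → IsHomogPoly n R :=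
    fun hR => by simpa using hR.1 n (by simp [hn])
  have hdiff : Tendsto (fun h => ‖(Q' - Q) h‖ / ‖h‖ ^ n) (𝓝[≠] 0) (𝓝 0) := by
    refine squeeze_zero (fun h => by positivity) (fun h => ?_) (by simpa using hQ.2.add hQ'.2)
    rw [← add_div]
    gcongr
    calc ‖(Q' - Q) h‖
        = ‖(f (x + h) - f x - ∑ k ∈ Icc 1 n, Function.update P n Q k h) -
            (f (x + h) - f x - ∑ k ∈ Icc 1 n, Function.update P n Q' k h)‖ := by
          rw [sum_Icc_update_top hn, sum_Icc_update_top hn, Pi.sub_apply]; ring_nf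
      _ ≤ _ := norm_sub_le _ _
  exact sub_eq_zero.1 ((homog hQ').sub (homog hQ) |>.eq_zero_of_tendsto (by omega) hdiff)

end HasTaylorExpansion

/-- If `f` has a Taylor expansion of order `n-1` at `x₀` and `Q ∈ ∂ⁿ f(x₀) ∩ ∂₊ⁿ f(x₀)`,
then `f` has a Taylor expansion of order `n` at `x₀` whose `n`-homogeneous part is `Q`,
and `Q` is the unique polynomial with this property. -/
theorem taylor_of_sub_inter_sup {N n : ℕ} (hn : 2 ≤ n)
    (f : Euc N → ℝ) (x₀ : Euc N) (P : ℕ → Euc N → ℝ)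
    (hP : HasTaylorExpansion f x₀ P (n - 1)) (Q : Euc N → ℝ)
    (hsub : SubPoly f x₀ P n Q) (hsup : SupPoly f x₀ P n Q) :
    HasTaylorExpansion f x₀ (Function.update P n Q) n ∧
    ∀ Q' : Euc N → ℝ, IsHomogPoly n Q' →
      HasTaylorExpansion f x₀ (Function.update P n Q') n → Q' = Q := by
  have hn₁ : 1 ≤ n := by omega
  have hQ := HasTaylorExpansion.update_of_subPoly_of_supPoly hn₁ hP.1 hsub hsup
  exact ⟨hQ, fun _ _ hQ' => hQ.eq_of_update hn₁ hQ'⟩
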